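/- arXiv:2212.12812 — 2 statements merged into one kernel-verified Lean document; each statement's English description precedes it below -/
import Mathlib

section
/- Let φ be the Boolean formula over X = {x_i : i ∈ Λ} ∪ {x_{ij} : i ≠ j} asserting (x_i ↔ x_j) ↔ x_{ij} for all i ≠ j, and let the literal-weight function be W(x_i, b) = exp(βμ h(i)(2b-1)) and W(x_{ij}, b) = exp(β J(i,j)(2b-1)) for b ∈ {0,1}. Then the weighted model count W(φ) = ∑_{τ : X → {0,1}, φ(τ)} ∏_{x∈X} W(x, τ(x)) equals the Ising partition function Z_β = ∑_{σ : Λ → {-1,1}} exp(-βH(σ)), where H(σ) = -∑_{i≠j} J(i,j)σ(i)σ(j) - μ∑_i h(i)σ(i). -/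
open Real

noncomputable def spin (b : Bool) : ℝ := if b then 1 else -1

noncomputable def bit (b : Bool) : ℝ := if b then 1 else 0

lemma two_bit (b : Bool) : 2 * bit b - 1 = spin b := by
  cases b <;> simp [bit, spin] <;> norm_num

lemma spin_beq (a b : Bool) : spin (a == b) = spin a * spin b := by
  cases a <;> cases b <;> simp [spin] <;> norm_num

theorem wmc_equals_partition_function {Λ : Type*} [Fintype Λ] [DecidableEq Λ]
    (J : Λ → Λ → ℝ) (hJ : ∀ i, J i i = 0) (h : Λ → ℝ)
    (μ : ℝ) (hμ : μ = -1 ∨ μ = 1) (β : ℝ) :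
    (∑ τ : (Λ → Bool) × ({p : Λ × Λ // p.1 ≠ p.2} → Bool),
      if (∀ p : {p : Λ × Λ // p.1 ≠ p.2}, τ.2 p = (τ.1 p.val.1 == τ.1 p.val.2)) then
        (∏ i, Real.exp (β * μ * h i * (2 * bit (τ.1 i) - 1)))
          * ∏ p : {p : Λ × Λ // p.1 ≠ p.2},
              Real.exp (β * J p.val.1 p.val.2 * (2 * bit (τ.2 p) - 1))
      else 0)
    = ∑ σ : Λ → Bool,
        Real.exp (-β *
          (-(∑ p : {p : Λ × Λ // p.1 ≠ p.2},
                J p.val.1 p.val.2 * spin (σ p.val.1) * spin (σ p.val.2))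
            - μ * ∑ i, h i * spin (σ i))) := by
  rw [Fintype.sum_prod_type]
  apply Finset.sum_congr rfl
  intro σ _
  rw [Finset.sum_eq_single (fun p : {p : Λ × Λ // p.1 ≠ p.2} => σ p.val.1 == σ p.val.2)]
  · rw [if_pos (fun p => rfl)]
    rw [← Real.exp_sum, ← Real.exp_sum, ← Real.exp_add]
    congr 1
    simp only [two_bit, spin_beq]
    have e1 : (∑ i, β * μ * h i * (spin (σ i)))
        = β * μ * ∑ i, h i * spin (σ i) := by
      rw [Finset.mul_sum]; exact Finset.sum_congr rfl fun i _ => by ring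
    have e2 : (∑ p : {p : Λ × Λ // p.1 ≠ p.2},
          β * J p.val.1 p.val.2 * (spin (σ p.val.1) * spin (σ p.val.2)))
        = β * ∑ p : {p : Λ × Λ // p.1 ≠ p.2},
            J p.val.1 p.val.2 * spin (σ p.val.1) * spin (σ p.val.2) := by
      rw [Finset.mul_sum]; exact Finset.sum_congr rfl fun p _ => by ring
    rw [e1, e2]; ring
  · intro b _ hb
    rw [if_neg]
    intro hall
    exact hb (funext fun p => hall p)
  · intro hmem
    exact absurd (Finset.mem_univ _) hmem
end

section
/- If a satisfying assignment τ of φ corresponds to the configuration σ via σ(i) = 2τ(x_i) - 1, then ∏_{x∈X} W(x, τ(x)) = exp(-βH(σ)), where W(x_i,b) = exp(βμh(i)(2b-1)), W(x_{ij},b) = exp(βJ(i,j)(2b-1)), and H(σ) = -∑_{i≠j} J(i,j)σ(i)σ(j) - μ∑_i h(i)σ(i). -/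
open Real

theorem sat_assignment_weight_eq_boltzmann {Λ : Type*} [Fintype Λ] [DecidableEq Λ]
    (J : Λ → Λ → ℝ) (hJ : ∀ i, J i i = 0) (h : Λ → ℝ)
    (μ : ℝ) (hμ : μ = -1 ∨ μ = 1) (β : ℝ)
    (t1 : Λ → Bool) (t2 : {p : Λ × Λ // p.1 ≠ p.2} → Bool)
    (hsat : ∀ p : {p : Λ × Λ // p.1 ≠ p.2}, t2 p = (t1 p.val.1 == t1 p.val.2))
    (σ : Λ → ℝ) (hστ : ∀ i, σ i = 2 * bit (t1 i) - 1) :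
    (∏ i, Real.exp (β * μ * h i * (2 * bit (t1 i) - 1)))
      * (∏ p : {p : Λ × Λ // p.1 ≠ p.2},
          Real.exp (β * J p.val.1 p.val.2 * (2 * bit (t2 p) - 1)))
    = Real.exp (-β *
        (-(∑ p : {p : Λ × Λ // p.1 ≠ p.2},
              J p.val.1 p.val.2 * σ p.val.1 * σ p.val.2)
          - μ * ∑ i, h i * σ i)) := by
  have key : ∀ p : {p : Λ × Λ // p.1 ≠ p.2},
      2 * bit (t2 p) - 1 = σ p.val.1 * σ p.val.2 := by
    intro p
    rw [hsat p, hστ, hστ]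
    cases t1 p.val.1 <;> cases t1 p.val.2 <;> simp [bit] <;> ring
  rw [← Real.exp_sum, ← Real.exp_sum, ← Real.exp_add]
  congr 1
  rw [Finset.sum_congr rfl (fun p _ => show
      β * J p.val.1 p.val.2 * (2 * bit (t2 p) - 1)
        = β * (J p.val.1 p.val.2 * σ p.val.1 * σ p.val.2) by rw [key p]; ring),
    Finset.sum_congr rfl (fun i _ => show
      β * μ * h i * (2 * bit (t1 i) - 1) = β * (μ * (h i * σ i)) by rw [hστ]; ring),
    ← Finset.mul_sum, ← Finset.mul_sum, ← Finset.mul_sum]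
  ring
end
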